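/- For every n ≥ 2, there exists a strongly connected primitive digraph on n nodes whose index of convergence is exactly (n-1)² + 1; concretely, the digraph with edges i → i+1 for 1 ≤ i ≤ n-1, n → 1, and n → 2 has no walk of length (n-1)² from node 1 to node 1, but has walks of every length ≥ (n-1)² + 1 between every pair of nodes. -/

import Mathlib

/-!
A walk in the Wielandt digraph climbs one node per step, except for the jumps `n - 1 → 0` and
`n - 1 → 1`, which lose `n` and `n - 1`. Hence a walk of length `k` from `i` to `j` satisfies
`k + i = j + a n + b (n - 1)` with `a, b ≥ 0`; conversely each such length is realised (with
`a ≥ 1`, or `b ≥ 1` when `j ≥ 1`) by climbing to `n - 1`, winding round the two cycles through it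
and jumping down last. A closed walk at `0` of length `(n - 1)²` must end with the jump to `0`,
which would give `n (n - 1) = (a + 1) n + (b + 1) (n - 1)`: impossible, as `n` and `n - 1` are
coprime. Beyond `(n - 1)²` every length is realised, because every integer `≥ (n - 1) (n - 2)` is a
nonnegative combination of `n` and `n - 1` (the two-coin Frobenius problem).
-/

/-- `f` lists the successive nodes of a walk of length `k` in the digraph with
edge relation `E`. -/
def IsGWalk {n : ℕ} (E : Fin n → Fin n → Prop) {k : ℕ} (f : Fin (k + 1) → Fin n) : Prop :=
  ∀ t : Fin k, E (f t.castSucc) (f t.succ)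

/-- A cycle: a nonempty closed walk in which only the start and end node coincide. -/
def IsGCycle {n : ℕ} (E : Fin n → Fin n → Prop) {k : ℕ} (f : Fin (k + 1) → Fin n) : Prop :=
  0 < k ∧ IsGWalk E f ∧ f 0 = f (Fin.last k) ∧
    Function.Injective (fun t : Fin k => f t.castSucc)

/-- The Wielandt digraph on `n` nodes (numbered `0, …, n-1`, i.e., node `i` of
the paper corresponds to index `i - 1`): edges `i → i+1` for `0 ≤ i ≤ n-2`, and
edges `n-1 → 0` and `n-1 → 1`. -/
def wielandtE (n : ℕ) : Fin n → Fin n → Prop :=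
  fun i j => (j : ℕ) = (i : ℕ) + 1 ∨ ((i : ℕ) = n - 1 ∧ ((j : ℕ) = 0 ∨ (j : ℕ) = 1))

section Walks

variable {n : ℕ} {E : Fin n → Fin n → Prop} {i j : Fin n}

def HasWalk (E : Fin n → Fin n → Prop) (k : ℕ) (i j : Fin n) : Prop :=
  ∃ f : Fin (k + 1) → Fin n, IsGWalk E f ∧ f 0 = i ∧ f (Fin.last k) = j

theorem isGWalk_cons {k : ℕ} (i : Fin n) (f : Fin (k + 1) → Fin n) :
    IsGWalk E (Fin.cons i f : Fin (k + 2) → Fin n) ↔ E i (f 0) ∧ IsGWalk E f := by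
  simp only [IsGWalk, Fin.forall_fin_succ, Fin.castSucc_zero, Fin.cons_zero,
    ← Fin.succ_castSucc, Fin.cons_succ]

theorem hasWalk_zero : HasWalk E 0 i j ↔ i = j := by
  constructor
  · rintro ⟨f, -, rfl, rfl⟩
    rfl
  · rintro rfl
    exact ⟨fun _ => i, fun t => t.elim0, rfl, rfl⟩

theorem hasWalk_succ {k : ℕ} : HasWalk E (k + 1) i j ↔ ∃ l, E i l ∧ HasWalk E k l j := by
  constructor
  · rintro ⟨f, hf, rfl, rfl⟩
    rw [← Fin.cons_self_tail f, isGWalk_cons] at hf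
    exact ⟨_, hf.1, Fin.tail f, hf.2, rfl, rfl⟩
  · rintro ⟨l, hil, f, hf, rfl, rfl⟩
    exact ⟨Fin.cons i f, (isGWalk_cons i f).2 ⟨hil, hf⟩, rfl, rfl⟩

theorem hasWalk_one : HasWalk E 1 i j ↔ E i j := by
  simp only [hasWalk_succ, hasWalk_zero, exists_eq_right]

theorem hasWalk_add {k m : ℕ} :
    HasWalk E (k + m) i j ↔ ∃ l, HasWalk E k i l ∧ HasWalk E m l j := by
  induction k generalizing i with
  | zero => simp only [zero_add, hasWalk_zero, exists_eq_left']
  | succ k ih =>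
    rw [Nat.succ_add, hasWalk_succ]
    simp only [ih, hasWalk_succ]
    grind

theorem HasWalk.trans {k m : ℕ} {l : Fin n} (h₁ : HasWalk E k i l) (h₂ : HasWalk E m l j) :
    HasWalk E (k + m) i j :=
  hasWalk_add.2 ⟨l, h₁, h₂⟩

theorem HasWalk.mul_left {k : ℕ} (h : HasWalk E k i i) (a : ℕ) : HasWalk E (a * k) i i := by
  induction a with
  | zero => exact (zero_mul k).symm ▸ hasWalk_zero.2 rfl
  | succ a ih => exact (add_one_mul a k).symm ▸ ih.trans h

end Walks

section Wielandt

variable {n : ℕ}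

theorem coprime_self_sub_one (hn : 1 ≤ n) : Nat.Coprime n (n - 1) :=
  (Nat.coprime_self_sub_right hn).2 (Nat.coprime_one_right n)

theorem hasWalk_wielandtE_of_le (i j : Fin n) (h : i ≤ j) :
    HasWalk (wielandtE n) (j - i) i j := by
  obtain ⟨d, hd⟩ : ∃ d, (j : ℕ) = i + d := ⟨j - i, by omega⟩
  rw [hd, Nat.add_sub_cancel_left]
  clear h
  induction d generalizing i with
  | zero => exact hasWalk_zero.2 (Fin.ext hd.symm)
  | succ d ih => exact hasWalk_succ.2 ⟨⟨i + 1, by omega⟩, Or.inl rfl, ih _ (by simp; omega)⟩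

theorem HasWalk.exists_length_eq {k : ℕ} {i j : Fin n} (h : HasWalk (wielandtE n) k i j) :
    ∃ a b : ℕ, k + i = j + (a * n + b * (n - 1)) := by
  induction k generalizing i with
  | zero => exact ⟨0, 0, by simp [hasWalk_zero.1 h]⟩
  | succ k ih =>
    obtain ⟨l, hil, hl⟩ := hasWalk_succ.1 h
    obtain ⟨a, b, hab⟩ := ih hl
    rcases hil with hl | ⟨hi, hl | hl⟩
    · exact ⟨a, b, by omega⟩
    · exact ⟨a + 1, b, by grind⟩
    · exact ⟨a, b + 1, by grind⟩

theorem hasWalk_wielandtE_top (hn : 1 < n) (a b : ℕ) :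
    HasWalk (wielandtE n) (a * n + b * (n - 1)) ⟨n - 1, by omega⟩ ⟨n - 1, by omega⟩ := by
  have long : HasWalk (wielandtE n) (n - 1 + 1) ⟨n - 1, by omega⟩ ⟨n - 1, by omega⟩ :=
    hasWalk_succ.2 ⟨⟨0, by omega⟩, Or.inr ⟨rfl, Or.inl rfl⟩,
      hasWalk_wielandtE_of_le ⟨0, by omega⟩ ⟨n - 1, by omega⟩ (Fin.le_def.2 (by simp))⟩
  have short : HasWalk (wielandtE n) (n - 2 + 1) ⟨n - 1, by omega⟩ ⟨n - 1, by omega⟩ :=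
    hasWalk_succ.2 ⟨⟨1, by omega⟩, Or.inr ⟨rfl, Or.inr rfl⟩,
      hasWalk_wielandtE_of_le ⟨1, by omega⟩ ⟨n - 1, by omega⟩ (Fin.le_def.2 (by simp; omega))⟩
  rw [Nat.sub_add_cancel (by omega)] at long
  rw [show n - 2 + 1 = n - 1 by omega] at short
  exact (long.mul_left a).trans (short.mul_left b)

theorem hasWalk_wielandtE_of_length_eq (hn : 1 < n) {k a b : ℕ} {i j : Fin n}
    (hk : k + i = j + (a * n + b * (n - 1))) (hab : 1 ≤ a ∨ 1 ≤ b ∧ 1 ≤ (j : ℕ)) :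
    HasWalk (wielandtE n) k i j := by
  have to_top : HasWalk (wielandtE n) (n - 1 - i) i ⟨n - 1, by omega⟩ :=
    hasWalk_wielandtE_of_le i ⟨n - 1, by omega⟩ (Fin.le_def.2 (by simp; omega))
  rcases hab with ha | ⟨hb, hj⟩
  · obtain ⟨a, rfl⟩ : ∃ a', a = a' + 1 := ⟨a - 1, by omega⟩
    have from_top : HasWalk (wielandtE n) (j - 0 + 1) ⟨n - 1, by omega⟩ j :=
      hasWalk_succ.2 ⟨⟨0, by omega⟩, Or.inr ⟨rfl, Or.inl rfl⟩,
        hasWalk_wielandtE_of_le ⟨0, by omega⟩ j (Fin.le_def.2 (Nat.zero_le _))⟩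
    convert (to_top.trans (hasWalk_wielandtE_top hn a b)).trans from_top using 1
    lia
  · obtain ⟨b, rfl⟩ : ∃ b', b = b' + 1 := ⟨b - 1, by omega⟩
    have from_top : HasWalk (wielandtE n) (j - 1 + 1) ⟨n - 1, by omega⟩ j :=
      hasWalk_succ.2 ⟨⟨1, by omega⟩, Or.inr ⟨rfl, Or.inr rfl⟩,
        hasWalk_wielandtE_of_le ⟨1, by omega⟩ j (Fin.le_def.2 hj)⟩
    convert (to_top.trans (hasWalk_wielandtE_top hn a b)).trans from_top using 1
    lia

theorem not_hasWalk_wielandtE_sq (hn : 1 < n) :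
    ¬ HasWalk (wielandtE n) ((n - 1) ^ 2) ⟨0, by omega⟩ ⟨0, by omega⟩ := by
  intro h
  obtain ⟨m, hm⟩ : ∃ m, (n - 1) ^ 2 = m + 1 :=
    ⟨_, (Nat.sub_add_cancel (Nat.one_le_pow 2 (n - 1) (by omega))).symm⟩
  obtain ⟨l, hl, hl0⟩ := hasWalk_add.1 (hm ▸ h)
  have hl_top : (l : ℕ) = n - 1 := by
    rcases hasWalk_one.1 hl0 with h0 | ⟨htop, -⟩
    · simp at h0
    · exact htop
  obtain ⟨a, b, hab⟩ := hl.exists_length_eq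
  apply (coprime_self_sub_one (n := n) (by omega)).mul_add_mul_ne_mul (a := a + 1) (b := b + 1)
    (by omega) (by omega)
  have hsq : n * (n - 1) = (n - 1) ^ 2 + (n - 1) := by
    rw [sq, ← Nat.add_one_mul, Nat.sub_add_cancel (by omega)]
  lia

theorem hasWalk_wielandtE_of_sq_lt (hn : 1 < n) (i j : Fin n) {k : ℕ} (hk : (n - 1) ^ 2 < k) :
    HasWalk (wielandtE n) k i j := by
  have hsq : (n - 1) ^ 2 = (n - 1) * (n - 2) + (n - 1) := by
    rw [sq, ← Nat.mul_add_one, show n - 2 + 1 = n - 1 by omega]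
  have frobenius (m : ℕ) (hm : (n - 1) * (n - 2) ≤ m) : ∃ a b, a * n + b * (n - 1) = m :=
    Nat.exists_add_mul_eq_of_gcd_dvd_of_mul_pred_le n (n - 1) m
      (by simp [(coprime_self_sub_one (n := n) (by omega)).gcd_eq_one])
      (by simpa [Nat.pred_eq_sub_one, Nat.sub_sub] using hm)
  rcases Nat.eq_zero_or_pos (j : ℕ) with hj | hj
  · obtain ⟨a, b, hab⟩ := frobenius (k + i - n) (by omega)
    exact hasWalk_wielandtE_of_length_eq hn (a := a + 1) (b := b) (by lia) (Or.inl le_add_self)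
  · obtain ⟨a, b, hab⟩ := frobenius (k + i - j) (by omega)
    have hab_pos : 1 ≤ a ∨ 1 ≤ b := by
      by_contra! h0
      obtain ⟨rfl, rfl⟩ : a = 0 ∧ b = 0 := by omega
      omega
    exact hasWalk_wielandtE_of_length_eq hn (by omega) (hab_pos.imp_right (⟨·, hj⟩))

end Wielandt

theorem wielandt_tight (n : ℕ) (hn : 2 ≤ n) :
    (¬ ∃ f : Fin ((n - 1) ^ 2 + 1) → Fin n, IsGWalk (wielandtE n) f ∧
        f 0 = ⟨0, by omega⟩ ∧ f (Fin.last ((n - 1) ^ 2)) = ⟨0, by omega⟩) ∧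
    (∀ i j : Fin n, ∀ k, (n - 1) ^ 2 + 1 ≤ k →
      ∃ f : Fin (k + 1) → Fin n, IsGWalk (wielandtE n) f ∧
        f 0 = i ∧ f (Fin.last k) = j) := by
  exact ⟨not_hasWalk_wielandtE_sq hn, fun i j _ hk => hasWalk_wielandtE_of_sq_lt hn i j hk⟩
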